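/- For γ > ρ > 0 and s ∈ ℂ, the function M_ρ(s) := ∫₀^∞ t^{s-1} Ψ(t) e^{-ρ log²(t)} dt satisfies the Gaussian convolution (heat-semigroup) identity M_ρ(s) = ∫_{-∞}^∞ M_γ(q) · exp(-(q-s)²/(4(γ-ρ))) / √(4π(γ-ρ)) dq. -/

import Mathlib

/-!
Put `β = γ - ρ`. For fixed `t > 0` the moment generating function of a Gaussian gives
`∫ t^(q-1) e^(-(q-s)²/(4β)) / √(4πβ) dq = t^(s-1) e^(β log² t)`, so after exchanging the
`q`- and `t`-integrals the right-hand side becomes `∫ t^(s-1) Ψ(t) e^(-ρ log² t) dt`.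
The exchange is legitimate because the `q`-integral of the absolute value is
`e^((Im s)²/(4β)) |t^(s-1)| e^(β log² t)`, and `t^(Re s - 1) Ψ(t) e^(-ρ log² t)` is integrable on
`(0, ∞)`: `Ψ(t) ≤ 1/(πt)`, and after `t = eᵘ` the factor `e^(-ρu²)` dominates.
-/

open MeasureTheory Real Filter

noncomputable def Psi (t : ℝ) : ℝ := ∑' n : ℕ, Real.exp (-Real.pi * ((n : ℝ) + 1) ^ 2 * t)

noncomputable def Xi (ρ : ℝ) (s : ℂ) : ℂ :=
  ∫ t in Set.Ioi (0:ℝ), (t : ℂ) ^ (s / 2 - 1) * (Psi t : ℂ) * (Real.exp (-ρ * Real.log t ^ 2) : ℂ)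

noncomputable def Mrho (ρ : ℝ) (s : ℂ) : ℂ :=
  ∫ t in Set.Ioi (0:ℝ), (t : ℂ) ^ (s - 1) * (Psi t : ℂ) * (Real.exp (-ρ * Real.log t ^ 2) : ℂ)

noncomputable def heatKernel (β : ℝ) (z : ℂ) : ℂ :=
  Complex.exp (-z ^ 2 / (4 * β)) / (Real.sqrt (4 * π * β) : ℂ)

section HeatKernel

variable {β : ℝ}

theorem cexp_mul_heatKernel_eq_cexp_quadratic (hβ : β ≠ 0) (w s : ℂ) (q : ℝ) :
    Complex.exp (w * (q - s)) * heatKernel β (q - s) =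
      Complex.exp (-(4 * β : ℂ)⁻¹ * q ^ 2 + (w + s / (2 * β)) * q +
        (-(w * s) - s ^ 2 / (4 * β))) / (Real.sqrt (4 * π * β) : ℂ) := by
  have hβ' : (β : ℂ) ≠ 0 := by exact_mod_cast hβ
  rw [heatKernel, mul_div_assoc', ← Complex.exp_add]
  congr 2
  field_simp
  ring

theorem integrable_cexp_mul_heatKernel (hβ : 0 < β) (w s : ℂ) :
    Integrable fun q : ℝ => Complex.exp (w * (q - s)) * heatKernel β (q - s) := by
  simp_rw [cexp_mul_heatKernel_eq_cexp_quadratic hβ.ne']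
  refine (integrable_cexp_quadratic ?_ _ _).div_const _
  norm_cast
  positivity

theorem integral_cexp_mul_heatKernel (hβ : 0 < β) (w s : ℂ) :
    ∫ q : ℝ, Complex.exp (w * (q - s)) * heatKernel β (q - s) = Complex.exp (β * w ^ 2) := by
  have hβ' : (β : ℂ) ≠ 0 := by exact_mod_cast hβ.ne'
  have hsqrt : (Real.sqrt (4 * π * β) : ℂ) ≠ 0 := by
    exact_mod_cast (Real.sqrt_pos.2 (by positivity)).ne'
  simp_rw [cexp_mul_heatKernel_eq_cexp_quadratic hβ.ne', integral_div]
  rw [integral_cexp_quadratic (by norm_cast; simp; positivity)]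
  have hpi : (π : ℂ) / -(-(4 * β : ℂ)⁻¹) = ((4 * π * β : ℝ) : ℂ) := by
    push_cast; field_simp
  have hroot : ((4 * π * β : ℝ) : ℂ) ^ (1 / 2 : ℂ) = (Real.sqrt (4 * π * β) : ℂ) := by
    rw [Real.sqrt_eq_rpow, Complex.ofReal_cpow (by positivity)]
    norm_num
  rw [hpi, hroot, mul_div_right_comm, div_self hsqrt, one_mul]
  congr 1
  field_simp
  ring

theorem norm_cexp_mul_heatKernel (L q : ℝ) (s : ℂ) :
    ‖Complex.exp (L * (q - s)) * heatKernel β (q - s)‖ =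
      Real.exp (s.im ^ 2 / (4 * β)) *
        (Complex.exp (L * (q - s.re)) * heatKernel β (q - s.re)).re := by
  have h4β : (4 * β : ℂ) = ((4 * β : ℝ) : ℂ) := by push_cast; ring
  have hreal : Complex.exp (L * (q - s.re)) * heatKernel β (q - s.re) =
      ((Real.exp (L * (q - s.re)) * Real.exp (-(q - s.re) ^ 2 / (4 * β)) /
        Real.sqrt (4 * π * β) : ℝ) : ℂ) := by
    rw [heatKernel, h4β]
    push_cast
    ring
  have hre : (-((q : ℂ) - s) ^ 2 / (4 * β)).re = (s.im ^ 2 - (q - s.re) ^ 2) / (4 * β) := by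
    rw [h4β, Complex.div_ofReal_re]
    simp only [Complex.neg_re, sq, Complex.mul_re, Complex.sub_re, Complex.sub_im,
      Complex.ofReal_re, Complex.ofReal_im]
    ring
  rw [hreal, Complex.ofReal_re, heatKernel, norm_mul, norm_div, Complex.norm_exp, Complex.norm_exp,
    hre, Complex.norm_real, Real.norm_of_nonneg (Real.sqrt_nonneg _)]
  simp only [Complex.re_ofReal_mul, Complex.sub_re, Complex.ofReal_re]
  rw [mul_div_assoc', mul_div_assoc', ← Real.exp_add, ← Real.exp_add, ← Real.exp_add]
  congr 2
  ring

theorem integral_norm_cexp_mul_heatKernel (hβ : 0 < β) (L : ℝ) (s : ℂ) :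
    ∫ q : ℝ, ‖Complex.exp (L * (q - s)) * heatKernel β (q - s)‖ =
      Real.exp (s.im ^ 2 / (4 * β) + β * L ^ 2) := by
  have hre := integral_re (integrable_cexp_mul_heatKernel hβ L s.re)
  simp only [RCLike.re_to_complex, integral_cexp_mul_heatKernel hβ] at hre
  simp_rw [norm_cexp_mul_heatKernel, integral_const_mul, hre, Real.exp_add]
  norm_cast

end HeatKernel

theorem integrable_prod_mul_cexp_mul_heatKernel {ν : Measure ℝ} [SFinite ν] {g : ℝ → ℂ}
    (hg : Integrable g ν) {β : ℝ} (hβ : 0 < β) (s : ℂ) :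
    Integrable (Function.uncurry fun (q t : ℝ) => g t * (Complex.exp (Real.log t * (q - s)) *
      heatKernel β (q - s) * Real.exp (-β * Real.log t ^ 2))) (volume.prod ν) := by
  set G : ℝ → ℝ → ℂ := fun q t =>
    Complex.exp (Real.log t * (q - s)) * heatKernel β (q - s) * Real.exp (-β * Real.log t ^ 2)
  have hmeas : AEStronglyMeasurable (Function.uncurry fun q t => g t * G q t) (volume.prod ν) := by
    have hG : Measurable fun p : ℝ × ℝ => G p.1 p.2 := by
      simp only [G, heatKernel]
      fun_prop
    exact hg.aestronglyMeasurable.comp_snd.mul hG.aestronglyMeasurable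
  have hG_norm (t : ℝ) : ∫ q, ‖G q t‖ = Real.exp (s.im ^ 2 / (4 * β)) := by
    simp only [G, norm_mul _ (Complex.ofReal _), Complex.norm_real,
      Real.norm_of_nonneg (Real.exp_pos _).le]
    rw [integral_mul_const, integral_norm_cexp_mul_heatKernel hβ, ← Real.exp_add]
    ring_nf
  rw [integrable_prod_iff' hmeas]
  constructor
  · refine Eventually.of_forall fun t => ?_
    show Integrable fun q => g t * G q t
    exact ((integrable_cexp_mul_heatKernel hβ (Real.log t) s).mul_const _).const_mul (g t)
  · have hnorm : (fun t => ∫ q, ‖Function.uncurry (fun q t => g t * G q t) (q, t)‖) =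
        fun t => ‖g t‖ * Real.exp (s.im ^ 2 / (4 * β)) := by
      ext t
      simp only [Function.uncurry_apply_pair, norm_mul (g t), integral_const_mul, hG_norm]
    rw [hnorm]
    exact hg.norm.mul_const _

theorem mellin_mul_exp_neg_log_sq_eq_integral_heatKernel {f : ℝ → ℂ} {ρ β : ℝ} {s : ℂ}
    (hβ : 0 < β) (hf : MellinConvergent (fun t => f t * Real.exp (-ρ * Real.log t ^ 2)) s) :
    mellin (fun t => f t * Real.exp (-ρ * Real.log t ^ 2)) s =
      ∫ q : ℝ, mellin (fun t => f t * Real.exp (-(ρ + β) * Real.log t ^ 2)) q *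
        heatKernel β (q - s) := by
  set g : ℝ → ℂ := fun t => (t : ℂ) ^ (s - 1) • (f t * Real.exp (-ρ * Real.log t ^ 2))
  set G : ℝ → ℝ → ℂ := fun q t =>
    Complex.exp (Real.log t * (q - s)) * heatKernel β (q - s) * Real.exp (-β * Real.log t ^ 2)
  have hG_integral (t : ℝ) : ∫ q, G q t = 1 := by
    rw [integral_mul_const, integral_cexp_mul_heatKernel hβ, Complex.ofReal_exp,
      ← Complex.exp_add]
    push_cast
    ring_nf
    exact Complex.exp_zero
  have hsplit (q : ℝ) {t : ℝ} (ht : 0 < t) : (t : ℂ) ^ ((q : ℂ) - 1) •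
      (f t * Real.exp (-(ρ + β) * Real.log t ^ 2)) * heatKernel β (q - s) = g t * G q t := by
    have hcpow (z : ℂ) : (t : ℂ) ^ z = Complex.exp (Real.log t * z) := by
      rw [Complex.cpow_def_of_ne_zero (by exact_mod_cast ht.ne'), Complex.ofReal_log ht.le]
    have hexp : Complex.exp (Real.log t * (q - 1) + (-(ρ + β) * Real.log t ^ 2 : ℝ)) =
        Complex.exp (Real.log t * (s - 1) + (-ρ * Real.log t ^ 2 : ℝ) +
          (Real.log t * (q - s) + (-β * Real.log t ^ 2 : ℝ))) := by
      push_cast; ring_nf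
    simp only [Complex.exp_add] at hexp
    simp only [g, G, smul_eq_mul, hcpow, Complex.ofReal_exp]
    linear_combination (f t * heatKernel β (q - s)) * hexp
  calc mellin (fun t => f t * Real.exp (-ρ * Real.log t ^ 2)) s
      = ∫ t in Set.Ioi 0, ∫ q, g t * G q t := by
        simp only [integral_const_mul, hG_integral, mul_one]
        rfl
    _ = ∫ q, ∫ t in Set.Ioi 0, g t * G q t :=
        (integral_integral_swap (integrable_prod_mul_cexp_mul_heatKernel hf hβ s)).symm
    _ = _ := by
        congr 1; ext q
        rw [mellin, ← integral_mul_const]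
        exact setIntegral_congr_fun measurableSet_Ioi fun t ht => (hsplit q ht).symm

theorem mellinConvergent_iff_integrable_cexp_smul {E : Type*} [NormedAddCommGroup E]
    [NormedSpace ℂ E] (f : ℝ → E) (s : ℂ) :
    MellinConvergent f s ↔ Integrable fun u : ℝ => Complex.exp (s * u) • f (Real.exp u) := by
  have h := integrableOn_image_iff_integrableOn_abs_deriv_smul MeasurableSet.univ
    (fun u _ => (Real.hasDerivAt_exp u).hasDerivWithinAt) Real.exp_injective.injOn
    (fun t => (t : ℂ) ^ (s - 1) • f t)
  rw [Set.image_univ, Real.range_exp, integrableOn_univ] at h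
  rw [MellinConvergent, h]
  refine integrable_congr (Eventually.of_forall fun u => ?_)
  have hcpow : (Real.exp u : ℂ) ^ (s - 1) = Complex.exp (s * u) * Complex.exp (-u) := by
    rw [Complex.cpow_def_of_ne_zero (by exact_mod_cast (Real.exp_pos u).ne'),
      ← Complex.ofReal_log (Real.exp_pos u).le, Real.log_exp, ← Complex.exp_add]
    ring_nf
  dsimp only
  rw [abs_of_pos (Real.exp_pos u), hcpow, ← smul_assoc, Complex.real_smul, Complex.ofReal_exp,
    mul_left_comm, ← Complex.exp_add, add_neg_cancel, Complex.exp_zero, mul_one]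

theorem exp_neg_pi_sq_mul_le {t : ℝ} (ht : 0 ≤ t) (n : ℕ) :
    Real.exp (-π * ((n : ℝ) + 1) ^ 2 * t) ≤
      Real.exp (-(π * t)) * Real.exp (-(π * t)) ^ n := by
  rw [← Real.exp_nat_mul, ← Real.exp_add, Real.exp_le_exp]
  have hn : (n : ℝ) + 1 ≤ ((n : ℝ) + 1) ^ 2 := by nlinarith [n.cast_nonneg (α := ℝ)]
  nlinarith [mul_le_mul_of_nonneg_right hn (mul_nonneg pi_pos.le ht)]

theorem summable_exp_neg_pi_sq_mul {t : ℝ} (ht : 0 < t) :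
    Summable fun n : ℕ => Real.exp (-π * ((n : ℝ) + 1) ^ 2 * t) := by
  have hr : Real.exp (-(π * t)) < 1 := Real.exp_lt_one_iff.2 (by nlinarith [pi_pos])
  exact .of_nonneg_of_le (fun n => (Real.exp_pos _).le) (exp_neg_pi_sq_mul_le ht.le)
    ((summable_geometric_of_lt_one (Real.exp_pos _).le hr).mul_left _)

theorem Psi_nonneg (t : ℝ) : 0 ≤ Psi t := tsum_nonneg fun _ => (Real.exp_pos _).le

theorem Psi_le_inv {t : ℝ} (ht : 0 < t) : Psi t ≤ (π * t)⁻¹ := by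
  set x := π * t
  have hx : 0 < x := by positivity
  set r := Real.exp (-x)
  have hr1 : r < 1 := Real.exp_lt_one_iff.2 (by linarith)
  have hgeom : ∑' n : ℕ, r * r ^ n = r * (1 - r)⁻¹ := by
    rw [tsum_mul_left, tsum_geometric_of_lt_one (Real.exp_pos _).le hr1]
  -- `r / (1 - r) = 1 / (eˣ - 1) ≤ 1 / x`
  have hrx : (x + 1) * r ≤ 1 := by
    calc (x + 1) * r ≤ Real.exp x * r := by gcongr; exact Real.add_one_le_exp x
      _ = 1 := by rw [← Real.exp_add, add_neg_cancel, Real.exp_zero]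
  calc Psi t ≤ ∑' n : ℕ, r * r ^ n :=
        Summable.tsum_le_tsum (exp_neg_pi_sq_mul_le ht.le) (summable_exp_neg_pi_sq_mul ht)
          ((summable_geometric_of_lt_one (Real.exp_pos _).le hr1).mul_left _)
    _ = r * (1 - r)⁻¹ := hgeom
    _ ≤ x⁻¹ := by
        rw [← div_eq_mul_inv, div_le_iff₀ (by linarith), inv_mul_eq_div, le_div_iff₀ hx]
        linarith

theorem continuousOn_Psi : ContinuousOn Psi (Set.Ioi 0) := by
  intro t ht
  have ht0 : (0 : ℝ) < t := ht
  have h : ContinuousOn Psi (Set.Ioi (t / 2)) := by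
    refine continuousOn_tsum (fun _ => by fun_prop)
      (summable_exp_neg_pi_sq_mul (by linarith : (0 : ℝ) < t / 2)) fun n x hx => ?_
    rw [Real.norm_of_nonneg (Real.exp_pos _).le, Real.exp_le_exp]
    have hc : -π * ((n : ℝ) + 1) ^ 2 ≤ 0 := by nlinarith [pi_pos]
    exact mul_le_mul_of_nonpos_left (le_of_lt hx) hc
  exact (h.continuousAt (Ioi_mem_nhds (by linarith))).continuousWithinAt

theorem mellinConvergent_Psi_mul_exp_neg_log_sq {ρ : ℝ} (hρ : 0 < ρ) (s : ℂ) :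
    MellinConvergent (fun t => (Psi t : ℂ) * Real.exp (-ρ * Real.log t ^ 2)) s := by
  rw [mellinConvergent_iff_integrable_cexp_smul]
  simp only [Real.log_exp]
  have hcont : Continuous fun u => Psi (Real.exp u) :=
    continuousOn_Psi.comp_continuous Real.continuous_exp Real.exp_pos
  refine ((integrable_cexp_quadratic (b := ρ) (by simpa) (s - 1) 0).norm.const_mul π⁻¹).mono'
    (Continuous.aestronglyMeasurable (by fun_prop)) (Eventually.of_forall fun u => ?_)
  have hre : (-(ρ : ℂ) * u ^ 2 + (s - 1) * u + 0).re = s.re * u + -u + -ρ * u ^ 2 := by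
    simp only [add_zero, Complex.add_re, Complex.mul_re, Complex.neg_re, Complex.ofReal_re,
      Complex.neg_im, Complex.ofReal_im, sq, Complex.sub_re, Complex.one_re, Complex.sub_im,
      Complex.one_im]
    ring
  have hΨ : Psi (Real.exp u) ≤ π⁻¹ * Real.exp (-u) := by
    simpa only [mul_inv, Real.exp_neg] using Psi_le_inv (Real.exp_pos u)
  rw [norm_smul, norm_mul, Complex.norm_exp, Complex.norm_exp, Complex.norm_real,
    Complex.norm_real, Real.norm_of_nonneg (Psi_nonneg _), Real.norm_of_nonneg (Real.exp_pos _).le,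
    Complex.re_mul_ofReal, hre, Real.exp_add, Real.exp_add]
  calc Real.exp (s.re * u) * (Psi (Real.exp u) * Real.exp (-ρ * u ^ 2))
      ≤ Real.exp (s.re * u) * (π⁻¹ * Real.exp (-u) * Real.exp (-ρ * u ^ 2)) := by gcongr
    _ = π⁻¹ * (Real.exp (s.re * u) * Real.exp (-u) * Real.exp (-ρ * u ^ 2)) := by ring

theorem Mrho_eq_mellin (ρ : ℝ) (s : ℂ) :
    Mrho ρ s = mellin (fun t => (Psi t : ℂ) * Real.exp (-ρ * Real.log t ^ 2)) s := by
  simp only [Mrho, mellin, smul_eq_mul, mul_assoc]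

theorem stmt9 (ρ γ : ℝ) (hρ : 0 < ρ) (h : ρ < γ) (s : ℂ) :
    Mrho ρ s = ∫ q : ℝ, Mrho γ (q : ℂ) *
      Complex.exp (-((q : ℂ) - s) ^ 2 / (4 * ((γ : ℂ) - ρ))) /
      (Real.sqrt (4 * Real.pi * (γ - ρ)) : ℂ) := by
  have key := mellin_mul_exp_neg_log_sq_eq_integral_heatKernel (sub_pos.2 h)
    (mellinConvergent_Psi_mul_exp_neg_log_sq hρ s)
  rw [add_sub_cancel] at key
  simp only [Mrho_eq_mellin, key, heatKernel, mul_div_assoc]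
  push_cast
  rfl
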